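/- Let f : X → X be continuous on a compact metric space, μ an f-invariant Borel probability measure, and φ : X → ℝ continuous. Then the measure-theoretic pressure P_μ(f,φ) = h_μ(f) + ∫φ dμ is at most the topological pressure P(f,φ). -/

import Mathlib

open MeasureTheory Filter

section Defs

variable {X : Type*}

/-- The entropy `∑_{A ∈ P} -μ(A) log μ(A)` of a finite partition `P`. -/
noncomputable def partitionEntropy [MeasurableSpace X] (μ : Measure X)
    (P : Finset (Set X)) : ℝ :=
  ∑ A ∈ P, Real.negMulLog (μ A).toReal

/-- The dynamical refinement `P ∨ f⁻¹P ∨ ⋯ ∨ f⁻⁽ⁿ⁻¹⁾P` of a finite partition. -/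
noncomputable def dynRefine (f : X → X) (P : Finset (Set X)) (n : ℕ) :
    Finset (Set X) := by
  classical
  exact Finset.image
    (fun c : Fin n → {A // A ∈ P} => ⋂ k : Fin n, f^[(k : ℕ)] ⁻¹' (c k : Set X))
    Finset.univ

/-- A finite measurable partition of `X`. -/
def IsMeasPartition [MeasurableSpace X] (P : Finset (Set X)) : Prop :=
  (∀ A ∈ P, MeasurableSet A) ∧ ((P : Set (Set X)).PairwiseDisjoint id) ∧
    ⋃₀ (P : Set (Set X)) = Set.univ

/-- The entropy of `f` relative to a finite partition `P`:
`lim (1/n) H_μ(P ∨ f⁻¹P ∨ ⋯ ∨ f⁻⁽ⁿ⁻¹⁾P)`. -/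
noncomputable def dynEntropy [MeasurableSpace X] (f : X → X) (μ : Measure X)
    (P : Finset (Set X)) : ℝ :=
  Filter.atTop.liminf fun n : ℕ => partitionEntropy μ (dynRefine f P n) / n

/-- The Kolmogorov–Sinai entropy of `f` with respect to `μ`: the supremum of the
partition entropies over all finite measurable partitions. -/
noncomputable def ksEntropy [MeasurableSpace X] (f : X → X) (μ : Measure X) : EReal :=
  ⨆ (P : Finset (Set X)) (_ : IsMeasPartition P), ((dynEntropy f μ P : ℝ) : EReal)

/-- `E` is `(n, ε)`-spanning for `f`. -/
def IsSpanning [PseudoMetricSpace X] (f : X → X) (n : ℕ) (ε : ℝ) (E : Finset X) : Prop :=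
  ∀ x : X, ∃ y ∈ E, ∀ k < n, dist (f^[k] x) (f^[k] y) < ε

/-- The minimal weighted sum `inf { ∑_{y ∈ E} exp(∑_{k<n} φ(fᵏ y)) }` over
`(n, ε)`-spanning sets `E`. -/
noncomputable def spanningSum [PseudoMetricSpace X] (f : X → X) (φ : X → ℝ)
    (n : ℕ) (ε : ℝ) : ℝ :=
  sInf {s : ℝ | ∃ E : Finset X, IsSpanning f n ε E ∧
    s = ∑ y ∈ E, Real.exp (∑ k ∈ Finset.range n, φ (f^[k] y))}

/-- The topological pressure of `(f, φ)`, defined via `(n, ε)`-spanning sets: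
`P(f,φ) = lim_{ε→0} limsup_{n→∞} (1/n) log inf {…}` (the limit as `ε → 0` is the
supremum over `ε > 0` by monotonicity). -/
noncomputable def topPressure [PseudoMetricSpace X] (f : X → X) (φ : X → ℝ) : EReal :=
  ⨆ (ε : ℝ) (_ : 0 < ε),
    Filter.atTop.limsup fun n : ℕ => ((Real.log (spanningSum f φ n ε) / n : ℝ) : EReal)

end Defs

/-!
Misiurewicz's argument. Fix a finite measurable partition `t` and a block length `m`. By inner
regularity each cell `u d` of the `m`-fold refinement of `t` contains a closed set `κ d` of almost
full measure. The `κ d` are compact and disjoint, so their `ε`-thickenings are disjoint for small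
`ε`; hence a point of an `(n m, ε)`-spanning set is close to at most `2ⁿ` cells of the `n`-fold
`f^[m]`-refinement of the partition into the `κ d` and the remainder `(⋃ κ)ᶜ`. Gibbs' inequality
then bounds the entropy of that refinement plus `∫ ∑_{k < n m} φ ∘ fᵏ dμ` by the logarithm of the
spanning sum plus `n (1 + log 2)`, and passing back to `t` costs at most `n` more because the
remainder has small measure. Divide by `n m`, let `n → ∞`, then `m → ∞`.
-/

open Real Finset Function Metric Topology

namespace Real

theorem negMulLog_sum_le {ι : Type*} (s : Finset ι) {p : ι → ℝ} (hp : ∀ i ∈ s, 0 ≤ p i) :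
    negMulLog (∑ i ∈ s, p i) ≤ ∑ i ∈ s, negMulLog (p i) := by
  rw [negMulLog, neg_mul, sum_mul, ← sum_neg_distrib]
  refine sum_le_sum fun i hi => ?_
  rw [negMulLog, neg_mul, neg_le_neg_iff]
  rcases (hp i hi).eq_or_lt with h | h
  · simp [← h]
  · exact mul_le_mul_of_nonneg_left (log_le_log h (single_le_sum hp hi)) h.le

/-- The log-sum inequality `∑ pᵢ log (bᵢ / pᵢ) ≤ (∑ pᵢ) log ((∑ bᵢ) / ∑ pᵢ)`. -/
theorem sum_mul_log_add_negMulLog_le {ι : Type*} (s : Finset ι) {p b : ι → ℝ}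
    (hp : ∀ i ∈ s, 0 ≤ p i) (hb : ∀ i ∈ s, 0 ≤ b i) (hpb : ∀ i ∈ s, 0 < p i → 0 < b i) :
    ∑ i ∈ s, (p i * log (b i) + negMulLog (p i))
      ≤ negMulLog (∑ i ∈ s, p i) + (∑ i ∈ s, p i) * log (∑ i ∈ s, b i) := by
  set P := ∑ i ∈ s, p i
  set B := ∑ i ∈ s, b i
  rcases (sum_nonneg hp).eq_or_lt with hP | hP
  · have hp0 : ∀ i ∈ s, p i = 0 := (sum_eq_zero_iff_of_nonneg hp).1 hP.symm
    rw [sum_eq_zero fun i hi => by simp [hp0 i hi], show P = 0 from hP.symm]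
    simp
  obtain ⟨j, hj, hpj⟩ := exists_lt_of_sum_lt (f := fun _ => (0 : ℝ)) (by simpa using hP)
  have hB : 0 < B := (hpb j hj hpj).trans_le (single_le_sum hb hj)
  -- termwise, this is `log x ≤ x - 1` at `x = bᵢ P / (pᵢ B)`
  have term : ∀ i ∈ s, p i * log (b i) + negMulLog (p i)
      ≤ p i * log (B / P) + (b i * P / B - p i) := by
    intro i hi
    rcases (hp i hi).eq_or_lt with h | h
    · rw [← h]
      simpa using div_nonneg (mul_nonneg (hb i hi) hP.le) hB.le
    have hbi := hpb i hi h
    have key := mul_le_mul_of_nonneg_left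
      (log_le_sub_one_of_pos (by positivity : 0 < b i * P / (p i * B))) h.le
    rw [log_div (by positivity) (by positivity), log_mul hbi.ne' hP.ne',
      log_mul h.ne' hB.ne'] at key
    rw [negMulLog, log_div hB.ne' hP.ne']
    have : p i * (b i * P / (p i * B) - 1) = b i * P / B - p i := by field_simp
    linarith
  calc ∑ i ∈ s, (p i * log (b i) + negMulLog (p i))
      ≤ ∑ i ∈ s, (p i * log (B / P) + (b i * P / B - p i)) := sum_le_sum term
    _ = negMulLog P + P * log B := by
      rw [sum_add_distrib, sum_sub_distrib, ← sum_mul, ← sum_div, ← sum_mul,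
        log_div hB.ne' hP.ne', negMulLog]
      field_simp
      ring

theorem sum_negMulLog_le {ι : Type*} (s : Finset ι) {p : ι → ℝ} (hp : ∀ i ∈ s, 0 ≤ p i) :
    ∑ i ∈ s, negMulLog (p i) ≤ negMulLog (∑ i ∈ s, p i) + (∑ i ∈ s, p i) * log #s := by
  simpa using sum_mul_log_add_negMulLog_le s hp (b := fun _ => 1) (by simp) (by simp)

theorem sum_negMulLog_sum_le {α β : Type*} [Fintype α] [Fintype β] {q : α → β → ℝ}
    (hq : ∀ a b, 0 ≤ q a b) {c : β → ℝ} (hc : ∀ b, (#{a | q a b ≠ 0} : ℝ) ≤ c b) :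
    ∑ a, negMulLog (∑ b, q a b)
      ≤ ∑ b, (negMulLog (∑ a, q a b) + (∑ a, q a b) * log (c b)) := by
  calc ∑ a, negMulLog (∑ b, q a b)
      ≤ ∑ a, ∑ b, negMulLog (q a b) := sum_le_sum fun a _ => negMulLog_sum_le _ fun b _ => hq a b
    _ = ∑ b, ∑ a ∈ {a | q a b ≠ 0}, negMulLog (q a b) := by
      rw [sum_comm]
      refine sum_congr rfl fun b _ => (sum_filter_of_ne fun a _ h => ?_).symm
      rintro h0
      simp [h0] at h
    _ ≤ ∑ b, (negMulLog (∑ a, q a b) + (∑ a, q a b) * log #{a | q a b ≠ 0}) := by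
      refine sum_le_sum fun b _ => ?_
      simpa only [sum_filter_ne_zero] using sum_negMulLog_le {a | q a b ≠ 0} fun a _ => hq a b
    _ ≤ _ := by
      refine sum_le_sum fun b _ => add_le_add le_rfl ?_
      rcases (Nat.zero_le #{a | q a b ≠ 0}).eq_or_lt with h0 | h0
      · have : ∀ a, q a b = 0 := by simpa [eq_comm (a := 0), filter_eq_empty_iff] using h0
        simp [this]
      · exact mul_le_mul_of_nonneg_left (log_le_log (by exact_mod_cast h0) (hc b))
          (sum_nonneg fun a _ => hq a b)

end Real

theorem Finset.card_le_card_pow_of_eqOn_compl {ι α : Type*} [Fintype α]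
    (s : Finset (ι → α)) (A : Finset ι) (h : ∀ w ∈ s, ∀ w' ∈ s, ∀ k ∉ A, w k = w' k) :
    #s ≤ Fintype.card α ^ #A := by
  classical
  have hinj : Set.InjOn (fun (w : ι → α) (k : A) => w k) s := by
    intro w hw w' hw' hww'
    funext k
    by_cases hk : k ∈ A
    · exact congrFun hww' ⟨k, hk⟩
    · exact h w hw w' hw' k hk
  simpa using card_le_card_of_injOn _ (fun _ _ => mem_univ _) hinj

theorem Finset.card_le_two_pow_of_some_eq {ι β : Type*} [Fintype ι]
    (s : Finset (ι → Option β))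
    (h : ∀ σ ∈ s, ∀ τ ∈ s, ∀ k d d', σ k = some d → τ k = some d' → d = d') :
    #s ≤ 2 ^ Fintype.card ι := by
  classical
  have hinj : Set.InjOn (fun (σ : ι → Option β) k => (σ k).isSome) s := by
    intro σ hσ τ hτ hστ
    funext k
    have hk := congrFun hστ k
    rcases hσk : σ k with _ | d <;> rcases hτk : τ k with _ | d' <;> simp_all
    exact h σ hσ τ hτ k d d' hσk hτk
  simpa using card_le_card_of_injOn _ (fun _ _ => mem_univ _) hinj

open scoped Classical in
theorem Finset.sum_sum_filter_le_mul {ι α : Type*} [Fintype ι] {E : Finset α}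
    {p : ι → α → Prop} {F : α → ℝ} (hF : ∀ y ∈ E, 0 ≤ F y) {M : ℝ}
    (hM : ∀ y ∈ E, (#{i | p i y} : ℝ) ≤ M) :
    ∑ i, ∑ y ∈ E with p i y, F y ≤ M * ∑ y ∈ E, F y := by
  rw [sum_comm' (t' := E) (s' := fun y => {i | p i y}) (by simp [and_comm]), mul_sum]
  simp only [sum_const, nsmul_eq_mul]
  exact sum_le_sum fun y hy => mul_le_mul_of_nonneg_right (hM y hy) (hF y hy)

section

variable {X : Type*}

open scoped Classical

structure IsMeasurablePartition [MeasurableSpace X] {ι : Type*} (t : ι → Set X) : Prop where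
  measurableSet : ∀ i, MeasurableSet (t i)
  pairwise_disjoint : Pairwise (Disjoint on t)
  exists_mem : ∀ x, ∃ i, x ∈ t i

noncomputable def indexedEntropy [MeasurableSpace X] (μ : Measure X) {ι : Type*} [Fintype ι]
    (t : ι → Set X) : ℝ :=
  ∑ i, negMulLog (μ.real (t i))

namespace IsMeasurablePartition

variable [MeasurableSpace X] {ι : Type*} {t : ι → Set X}

theorem eq_of_mem (ht : IsMeasurablePartition t) {i j : ι} {x : X} (hi : x ∈ t i)
    (hj : x ∈ t j) : i = j :=
  by_contra fun h => Set.disjoint_left.1 (ht.pairwise_disjoint h) hi hj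

theorem sum_measureReal_inter [Fintype ι] (ht : IsMeasurablePartition t) (μ : Measure X)
    [IsFiniteMeasure μ] {s : Set X} (hs : MeasurableSet s) :
    ∑ i, μ.real (s ∩ t i) = μ.real s := by
  rw [← measureReal_iUnion_fintype (fun i j hij => (ht.pairwise_disjoint hij).mono
    Set.inter_subset_right Set.inter_subset_right) fun i => hs.inter (ht.measurableSet i),
    ← Set.inter_iUnion, Set.iUnion_eq_univ_iff.2 ht.exists_mem, Set.inter_univ]

theorem sum_measureReal [Fintype ι] (ht : IsMeasurablePartition t) (μ : Measure X)
    [IsProbabilityMeasure μ] : ∑ i, μ.real (t i) = 1 := by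
  simpa using ht.sum_measureReal_inter μ MeasurableSet.univ

theorem integral_le_sum [Fintype ι] (ht : IsMeasurablePartition t) {μ : Measure X}
    [IsFiniteMeasure μ] {S : X → ℝ} (hS : Integrable S μ) {a : ι → ℝ}
    (hSa : ∀ i, ∀ x ∈ t i, S x ≤ a i) :
    ∫ x, S x ∂μ ≤ ∑ i, μ.real (t i) * a i := by
  rw [← setIntegral_univ, ← Set.iUnion_eq_univ_iff.2 ht.exists_mem,
    integral_iUnion_fintype ht.measurableSet ht.pairwise_disjoint fun i => hS.integrableOn]
  refine sum_le_sum fun i _ => ?_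
  calc ∫ x in t i, S x ∂μ ≤ ∫ _ in t i, a i ∂μ :=
        setIntegral_mono_on hS.integrableOn (integrableOn_const (measure_ne_top _ _))
          (ht.measurableSet i) (hSa i)
    _ = μ.real (t i) * a i := by rw [setIntegral_const, smul_eq_mul]

end IsMeasurablePartition

theorem IsMeasPartition.isMeasurablePartition [MeasurableSpace X] {P : Finset (Set X)}
    (hP : IsMeasPartition P) : IsMeasurablePartition ((↑) : P → Set X) where
  measurableSet A := hP.1 A A.2
  pairwise_disjoint A B hAB := hP.2.1 A.2 B.2 (Subtype.coe_ne_coe.2 hAB)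
  exists_mem x := by
    obtain ⟨A, hA, hxA⟩ := Set.mem_sUnion.1 (hP.2.2.symm ▸ Set.mem_univ x)
    exact ⟨⟨A, hA⟩, hxA⟩

/-- The chain rule `H(U) ≤ H(V) + H(U | V)`, bounding the conditional entropy on `V b` by the
logarithm of the number of cells of `U` that meet it. -/
theorem indexedEntropy_le_add [MeasurableSpace X] {α β : Type*} [Fintype α] [Fintype β]
    {μ : Measure X} [IsFiniteMeasure μ] {U : α → Set X} {V : β → Set X}
    (hU : IsMeasurablePartition U) (hV : IsMeasurablePartition V) {c : β → ℝ}
    (hc : ∀ b, (#{a | (U a ∩ V b).Nonempty} : ℝ) ≤ c b) :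
    indexedEntropy μ U ≤ indexedEntropy μ V + ∑ b, μ.real (V b) * log (c b) := by
  have hrow a : ∑ b, μ.real (U a ∩ V b) = μ.real (U a) :=
    hV.sum_measureReal_inter μ (hU.measurableSet a)
  have hcol b : ∑ a, μ.real (U a ∩ V b) = μ.real (V b) := by
    simpa only [Set.inter_comm] using hU.sum_measureReal_inter μ (hV.measurableSet b)
  have hc' b : (#{a | μ.real (U a ∩ V b) ≠ 0} : ℝ) ≤ c b := by
    refine le_trans ?_ (hc b)
    gcongr with a
    exact fun h => Set.nonempty_iff_ne_empty.2 fun he => h (by simp [he])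
  simpa [indexedEntropy, hrow, hcol, sum_add_distrib] using
    sum_negMulLog_sum_le (fun a b => measureReal_nonneg) hc'

theorem indexedEntropy_add_integral_le_log_sum [MeasurableSpace X] {μ : Measure X}
    [IsProbabilityMeasure μ] {ι : Type*} [Fintype ι] {V : ι → Set X}
    (hV : IsMeasurablePartition V) {S : X → ℝ} (hS : Integrable S μ) {b : ι → ℝ}
    (hb : ∀ i, 0 ≤ b i) (hbpos : ∀ i, (V i).Nonempty → 0 < b i)
    (hSb : ∀ i, ∀ x ∈ V i, S x ≤ log (b i)) :
    indexedEntropy μ V + ∫ x, S x ∂μ ≤ log (∑ i, b i) := by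
  have hint := hV.integral_le_sum hS hSb
  have hgibbs := sum_mul_log_add_negMulLog_le univ (fun i _ => measureReal_nonneg (μ := μ))
    (fun i _ => hb i) fun i _ h => hbpos i (nonempty_of_measureReal_ne_zero h.ne')
  rw [hV.sum_measureReal μ, negMulLog_one, one_mul, zero_add, sum_add_distrib] at hgibbs
  rw [indexedEntropy]
  linarith

theorem indexedEntropy_add_integral_le [MeasurableSpace X] {μ : Measure X}
    [IsProbabilityMeasure μ] {ι : Type*} [Fintype ι] {V : ι → Set X}
    (hV : IsMeasurablePartition V) {S : X → ℝ} (hS : Integrable S μ) {E : Finset X}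
    {R : X → X → Prop} (hE : ∀ x, ∃ y ∈ E, R x y) {c : ℝ} (hSR : ∀ x y, R x y → S x ≤ S y + c)
    {M : ℝ} (hM : ∀ y ∈ E, (#{i | ∃ x ∈ V i, R x y} : ℝ) ≤ M) :
    indexedEntropy μ V + ∫ x, S x ∂μ ≤ log (∑ y ∈ E, exp (S y)) + c + log M := by
  -- Gibbs' inequality for the weight `b i` of the points of `E` related to `V i`; by double
  -- counting, `∑ b i ≤ M e^c ∑_{y ∈ E} exp (S y)`
  set b : ι → ℝ := fun i => ∑ y ∈ E with ∃ x ∈ V i, R x y, exp (S y + c)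
  have hmem {i x} (hx : x ∈ V i) :
      ∃ y ∈ ({y ∈ E | ∃ x ∈ V i, R x y} : Finset X), S x ≤ S y + c := by
    obtain ⟨y, hyE, hxy⟩ := hE x
    exact ⟨y, mem_filter.2 ⟨hyE, x, hx, hxy⟩, hSR x y hxy⟩
  have hb i : 0 ≤ b i := sum_nonneg fun _ _ => (exp_pos _).le
  have hbpos i : (V i).Nonempty → 0 < b i := fun ⟨x, hx⟩ => by
    obtain ⟨y, hy, -⟩ := hmem hx
    exact sum_pos (fun _ _ => exp_pos _) ⟨y, hy⟩
  have hSb i : ∀ x ∈ V i, S x ≤ log (b i) := fun x hx => by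
    obtain ⟨y, hy, hSxy⟩ := hmem hx
    calc S x ≤ log (exp (S y + c)) := by rwa [log_exp]
      _ ≤ log (b i) := log_le_log (exp_pos _)
        (single_le_sum (f := fun y => exp (S y + c)) (fun _ _ => (exp_pos _).le) hy)
  have hsum_pos : 0 < ∑ i, b i := by
    obtain ⟨i, hi⟩ := hV.exists_mem (nonempty_of_isProbabilityMeasure μ).some
    exact (hbpos i ⟨_, hi⟩).trans_le (single_le_sum (fun i _ => hb i) (mem_univ i))
  have hsum : ∑ i, b i ≤ M * ((∑ y ∈ E, exp (S y)) * exp c) := by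
    simpa only [b, exp_add, ← sum_mul] using
      sum_sum_filter_le_mul (F := fun y => exp (S y + c)) (fun _ _ => (exp_pos _).le) hM
  obtain ⟨hM0, hE0⟩ := mul_ne_zero_iff.1 (hsum_pos.trans_le hsum).ne'
  calc indexedEntropy μ V + ∫ x, S x ∂μ ≤ log (∑ i, b i) :=
        indexedEntropy_add_integral_le_log_sum hV hS hb hbpos hSb
    _ ≤ log (M * ((∑ y ∈ E, exp (S y)) * exp c)) := log_le_log hsum_pos hsum
    _ = log (∑ y ∈ E, exp (S y)) + c + log M := by
        rw [log_mul hM0 hE0, log_mul (left_ne_zero_of_mul hE0) (exp_pos c).ne', log_exp]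
        ring

def dynCell (f : X → X) {ι : Type*} (t : ι → Set X) (n : ℕ) (c : Fin n → ι) : Set X :=
  ⋂ k : Fin n, f^[k] ⁻¹' t (c k)

section dynCell

variable {f : X → X} {ι : Type*} {t : ι → Set X}

@[simp]
theorem mem_dynCell {n : ℕ} {c : Fin n → ι} {x : X} :
    x ∈ dynCell f t n c ↔ ∀ k : Fin n, f^[k] x ∈ t (c k) :=
  Set.mem_iInter

theorem pairwise_disjoint_dynCell (ht : Pairwise (Disjoint on t)) (n : ℕ) :
    Pairwise (Disjoint on dynCell f t n) := by
  intro c c' hcc'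
  obtain ⟨k, hk⟩ := Function.ne_iff.1 hcc'
  exact Set.disjoint_left.2 fun x hx hx' =>
    Set.disjoint_left.1 (ht hk) (mem_dynCell.1 hx k) (mem_dynCell.1 hx' k)

theorem IsMeasurablePartition.dynCell [MeasurableSpace X] (ht : IsMeasurablePartition t)
    (hf : Measurable f) (n : ℕ) : IsMeasurablePartition (dynCell f t n) where
  measurableSet c := .iInter fun k => hf.iterate k (ht.measurableSet (c k))
  pairwise_disjoint := pairwise_disjoint_dynCell ht.pairwise_disjoint n
  exists_mem x := by
    choose c hc using fun k : Fin n => ht.exists_mem (f^[k] x)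
    exact ⟨c, mem_dynCell.2 hc⟩

/-- Letter `i` of block `k` goes to position `i + m * k`. -/
def blockEquiv (ι : Type*) (n m : ℕ) : (Fin n → Fin m → ι) ≃ (Fin (n * m) → ι) :=
  (Equiv.curry _ _ _).symm.trans (finProdFinEquiv.arrowCongr (Equiv.refl ι))

theorem dynCell_iterate (m n : ℕ) (w : Fin n → Fin m → ι) :
    dynCell f^[m] (dynCell f t m) n w = dynCell f t (n * m) (blockEquiv ι n m w) := by
  ext x
  simp only [mem_dynCell, blockEquiv, Equiv.trans_apply, Equiv.arrowCongr_apply,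
    Equiv.coe_refl, Function.comp_apply, id]
  rw [← finProdFinEquiv.forall_congr_right, Prod.forall]
  simp [finProdFinEquiv_apply_val, ← Function.iterate_mul, ← Function.iterate_add_apply,
    Nat.mul_comm m]

theorem indexedEntropy_dynCell_mul [MeasurableSpace X] [Fintype ι] (μ : Measure X)
    (m n : ℕ) :
    indexedEntropy μ (dynCell f t (n * m))
      = indexedEntropy μ (dynCell f^[m] (dynCell f t m) n) := by
  simp only [indexedEntropy, dynCell_iterate]
  exact ((blockEquiv ι n m).sum_comp fun c => negMulLog (μ.real (dynCell f t (n * m) c))).symm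

theorem partitionEntropy_dynRefine [MeasurableSpace X] (μ : Measure X)
    {P : Finset (Set X)} (hP : IsMeasPartition P) (n : ℕ) :
    partitionEntropy μ (dynRefine f P n) = indexedEntropy μ (dynCell f ((↑) : P → Set X) n) :=
  sum_image_of_disjoint (by simp)
    ((pairwise_disjoint_dynCell hP.isMeasurablePartition.pairwise_disjoint n).set_pairwise _)

end dynCell

/-- By invariance, each time `k < n` sees `v a` with probability `μ (v a)`. -/
theorem sum_measureReal_dynCell_mul_card [MeasurableSpace X] {g : X → X} {μ : Measure X}
    [IsFiniteMeasure μ] (hg : MeasurePreserving g μ μ) {ι : Type*} [Fintype ι] {v : ι → Set X}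
    (hv : IsMeasurablePartition v) (n : ℕ) (a : ι) :
    ∑ σ, μ.real (dynCell g v n σ) * #{k | σ k = a} = n * μ.real (v a) := by
  have hslice σ k : μ.real (dynCell g v n σ) * (if σ k = a then 1 else 0)
      = μ.real (g^[k] ⁻¹' v a ∩ dynCell g v n σ) := by
    split_ifs with h
    · rw [mul_one, Set.inter_eq_right.2 fun x hx => h ▸ mem_dynCell.1 hx k]
    · rw [mul_zero, Set.disjoint_iff_inter_eq_empty.1, measureReal_empty]
      exact Set.disjoint_left.2 fun x hx hx' =>
        Set.disjoint_left.1 (hv.pairwise_disjoint (Ne.symm h)) hx (mem_dynCell.1 hx' k)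
  have hpre k : MeasurableSet (g^[k] ⁻¹' v a) := hg.measurable.iterate k (hv.measurableSet a)
  simp_rw [card_filter, Nat.cast_sum, Nat.cast_ite, Nat.cast_one, Nat.cast_zero, mul_sum, hslice]
  rw [sum_comm]
  simp [(hv.dynCell hg.measurable n).sum_measureReal_inter μ (hpre _),
    (hg.iterate _).measureReal_preimage (hv.measurableSet a).nullMeasurableSet]

def withRemainder {β : Type*} (κ : β → Set X) : Option β → Set X :=
  fun o => o.elim (⋃ d, κ d)ᶜ κ

theorem IsMeasurablePartition.withRemainder [MeasurableSpace X] {β : Type*} [Countable β]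
    {u κ : β → Set X} (hu : IsMeasurablePartition u) (hκu : ∀ d, κ d ⊆ u d)
    (hκ : ∀ d, MeasurableSet (κ d)) :
    IsMeasurablePartition (withRemainder κ) where
  measurableSet
    | none => (MeasurableSet.iUnion hκ).compl
    | some d => hκ d
  pairwise_disjoint
    | none, none, h => absurd rfl h
    | none, some d, _ => disjoint_compl_left.mono_right (Set.subset_iUnion κ d)
    | some d, none, _ => disjoint_compl_right.mono_left (Set.subset_iUnion κ d)
    | some d, some d', h =>
      (hu.pairwise_disjoint fun hd => h (congrArg some hd)).mono (hκu d) (hκu d')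
  exists_mem x := by
    by_cases hx : x ∈ ⋃ d, κ d
    · obtain ⟨d, hd⟩ := Set.mem_iUnion.1 hx
      exact ⟨some d, hd⟩
    · exact ⟨none, hx⟩

theorem indexedEntropy_dynCell_le_add [MeasurableSpace X] {g : X → X} {μ : Measure X}
    [IsFiniteMeasure μ] (hg : MeasurePreserving g μ μ) {β : Type*} [Fintype β]
    {u κ : β → Set X} (hu : IsMeasurablePartition u) (hκu : ∀ d, κ d ⊆ u d)
    (hκ : ∀ d, MeasurableSet (κ d)) (n : ℕ) :
    indexedEntropy μ (dynCell g u n)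
      ≤ indexedEntropy μ (dynCell g (withRemainder κ) n)
        + n * μ.real (⋃ d, κ d)ᶜ * log (Fintype.card β) := by
  have hv := hu.withRemainder hκu hκ
  -- a cell of `u` meeting `κ d` is `u d`, so only the times spent in the remainder are free
  have hcount σ : (#{w | (dynCell g u n w ∩ dynCell g (withRemainder κ) n σ).Nonempty} : ℝ)
      ≤ Fintype.card β ^ #{k | σ k = none} := by
    refine mod_cast card_le_card_pow_of_eqOn_compl _ _ fun w hw w' hw' k hk => ?_
    obtain ⟨d, hd⟩ := Option.ne_none_iff_exists'.1 (by simpa using hk)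
    have hcell {w} (hw : w ∈ ({w | (dynCell g u n w ∩ dynCell g (withRemainder κ) n σ).Nonempty} :
        Finset _)) : w k = d := by
      obtain ⟨x, hxu, hxv⟩ := (mem_filter.1 hw).2
      have hxκ : g^[k] x ∈ κ d := by simpa [withRemainder, hd] using mem_dynCell.1 hxv k
      exact hu.eq_of_mem (mem_dynCell.1 hxu k) (hκu d hxκ)
    rw [hcell hw, hcell hw']
  refine (indexedEntropy_le_add (hu.dynCell hg.measurable n) (hv.dynCell hg.measurable n)
    hcount).trans_eq ?_
  simp_rw [log_pow, ← mul_assoc]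
  rw [← sum_mul]
  congr 2
  -- the two counts differ only in their decidability instances
  convert sum_measureReal_dynCell_mul_card hg hv n none using 3
  · congr!
  · rfl
theorem exists_pos_pairwise_disjoint_thickening [PseudoMetricSpace X] [CompactSpace X]
    {β : Type*} [Finite β] {κ : β → Set X} (hκ : ∀ d, IsClosed (κ d))
    (hdisj : Pairwise (Disjoint on κ)) :
    ∃ δ > 0, Pairwise (Disjoint on fun d => thickening δ (κ d)) := by
  have hev : ∀ p : β × β, ∀ᶠ δ in 𝓝[>] (0 : ℝ),
      p.1 ≠ p.2 → Disjoint (thickening δ (κ p.1)) (thickening δ (κ p.2)) := by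
    rintro ⟨d, d'⟩
    by_cases h : d = d'
    · exact .of_forall fun _ hne => absurd h hne
    obtain ⟨δ, hδ, hδdisj⟩ := (hdisj h).exists_thickenings (hκ d).isCompact (hκ d')
    filter_upwards [Ioo_mem_nhdsGT hδ] with ε hε _
    exact hδdisj.mono (thickening_mono hε.2.le _) (thickening_mono hε.2.le _)
  obtain ⟨δ, hδ, hδpos⟩ := ((eventually_all.2 hev).and self_mem_nhdsWithin).exists
  exact ⟨δ, hδpos, fun d d' h => hδ (d, d') h⟩

theorem IsMeasurablePartition.exists_isClosed_subset_measureReal_compl_le [PseudoMetricSpace X]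
    [MeasurableSpace X] [BorelSpace X] {β : Type*} [Fintype β] {u : β → Set X}
    (hu : IsMeasurablePartition u) (μ : Measure X) [IsFiniteMeasure μ] {η : ℝ} (hη : 0 < η) :
    ∃ κ : β → Set X, (∀ d, κ d ⊆ u d) ∧ (∀ d, IsClosed (κ d)) ∧ μ.real (⋃ d, κ d)ᶜ ≤ η := by
  have hε : 0 < η / (Fintype.card β + 1) := by positivity
  choose κ hκu hκ hκμ using fun d => (hu.measurableSet d).exists_isClosed_sdiff_lt
    (measure_ne_top μ (u d)) (ENNReal.ofReal_pos.2 hε).ne'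
  refine ⟨κ, hκu, hκ, ?_⟩
  have hsub : (⋃ d, κ d)ᶜ ⊆ ⋃ d, u d \ κ d := fun x hx => by
    obtain ⟨d, hd⟩ := hu.exists_mem x
    exact Set.mem_iUnion.2 ⟨d, hd, fun h => hx (Set.mem_iUnion.2 ⟨d, h⟩)⟩
  calc μ.real (⋃ d, κ d)ᶜ ≤ ∑ d, μ.real (u d \ κ d) :=
        (measureReal_mono hsub).trans (measureReal_iUnion_fintype_le _)
    _ ≤ ∑ _d : β, η / (Fintype.card β + 1) :=
        sum_le_sum fun d _ => ENNReal.toReal_le_of_le_ofReal hε.le (hκμ d).le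
    _ ≤ η := by
        rw [sum_const, card_univ, nsmul_eq_mul, mul_div_assoc', div_le_iff₀ (by positivity)]
        nlinarith

theorem card_near_dynCell_withRemainder_le [PseudoMetricSpace X] {β : Type*} [Fintype β]
    {κ : β → Set X} {ε : ℝ} (hκ : Pairwise (Disjoint on fun d => thickening ε (κ d)))
    (g : X → X) (n : ℕ) (y : X) :
    #{σ | ∃ x ∈ dynCell g (withRemainder κ) n σ, ∀ k : Fin n, dist (g^[k] x) (g^[k] y) < ε}
      ≤ 2 ^ n := by
  have hnear {σ} (hσ : σ ∈ ({σ | ∃ x ∈ dynCell g (withRemainder κ) n σ,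
      ∀ k : Fin n, dist (g^[k] x) (g^[k] y) < ε} : Finset _)) {k d} (hd : σ k = some d) :
      g^[k] y ∈ thickening ε (κ d) := by
    obtain ⟨x, hx, hxy⟩ := (mem_filter.1 hσ).2
    have hxκ : g^[k] x ∈ κ d := by simpa [withRemainder, hd] using mem_dynCell.1 hx k
    exact mem_thickening_iff.2 ⟨_, hxκ, dist_comm (g^[k] x) _ ▸ hxy k⟩
  simpa using card_le_two_pow_of_some_eq _ fun σ hσ τ hτ k d d' hd hd' =>
    by_contra fun h => Set.disjoint_left.1 (hκ h) (hnear hσ hd) (hnear hτ hd')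

theorem birkhoffSum_le_add_of_forall_dist_lt [PseudoMetricSpace X] {f : X → X} {φ : X → ℝ}
    {δ c : ℝ} (hφ : ∀ a b, dist a b < δ → φ a ≤ φ b + c) {n : ℕ} {x y : X}
    (hxy : ∀ k < n, dist (f^[k] x) (f^[k] y) < δ) :
    birkhoffSum f φ n x ≤ birkhoffSum f φ n y + n * c := by
  calc birkhoffSum f φ n x ≤ ∑ k ∈ range n, (φ (f^[k] y) + c) :=
        sum_le_sum fun k hk => hφ _ _ (hxy k (mem_range.1 hk))
    _ = birkhoffSum f φ n y + n * c := by
        rw [sum_add_distrib, sum_const, card_range, nsmul_eq_mul]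
        rfl

theorem MeasureTheory.MeasurePreserving.integral_birkhoffSum [MeasurableSpace X] {f : X → X}
    {μ : Measure X} (hf : MeasurePreserving f μ μ) {φ : X → ℝ} (hφ : Integrable φ μ) (n : ℕ) :
    ∫ x, birkhoffSum f φ n x ∂μ = n * ∫ x, φ x ∂μ := by
  have hmap k : μ.map f^[k] = μ := (hf.iterate k).map_eq
  have hint k : Integrable (fun x => φ (f^[k] x)) μ :=
    ((hf.iterate k).integrable_comp hφ.aestronglyMeasurable).2 hφ
  have hk k : ∫ x, φ (f^[k] x) ∂μ = ∫ x, φ x ∂μ := by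
    rw [← integral_map (hf.iterate k).measurable.aemeasurable
      (by rw [hmap k]; exact hφ.aestronglyMeasurable), hmap k]
  simp only [birkhoffSum]
  rw [integral_finsetSum _ fun k _ => hint k]
  simp [hk]

theorem exists_isSpanning [PseudoMetricSpace X] [CompactSpace X] {f : X → X}
    (hf : Continuous f) (n : ℕ) {ε : ℝ} (hε : 0 < ε) : ∃ E : Finset X, IsSpanning f n ε E := by
  obtain ⟨E, hE⟩ := isCompact_univ.elim_finite_subcover
    (fun y => ⋂ k : Fin n, f^[k] ⁻¹' ball (f^[k] y) ε)
    (fun y => isOpen_iInter_of_finite fun k => isOpen_ball.preimage (hf.iterate k))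
    fun x _ => Set.mem_iUnion.2 ⟨x, Set.mem_iInter.2 fun k => mem_ball_self hε⟩
  refine ⟨E, fun x => ?_⟩
  obtain ⟨y, hy, hxy⟩ := Set.mem_iUnion₂.1 (hE (Set.mem_univ x))
  exact ⟨y, hy, fun k hk => Set.mem_iInter.1 hxy ⟨k, hk⟩⟩

theorem le_log_spanningSum [PseudoMetricSpace X] [CompactSpace X] [Nonempty X] {f : X → X}
    (hf : Continuous f) (φ : X → ℝ) (n : ℕ) {ε : ℝ} (hε : 0 < ε) {B : ℝ}
    (h : ∀ E, IsSpanning f n ε E → B ≤ log (∑ y ∈ E, exp (birkhoffSum f φ n y))) :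
    B ≤ log (spanningSum f φ n ε) := by
  have hexp : ∀ s ∈ {s : ℝ | ∃ E : Finset X, IsSpanning f n ε E ∧
      s = ∑ y ∈ E, exp (∑ k ∈ range n, φ (f^[k] y))}, exp B ≤ s := by
    rintro _ ⟨E, hE, rfl⟩
    obtain ⟨y, hy, -⟩ := hE (Classical.arbitrary X)
    exact (le_log_iff_exp_le (sum_pos (fun _ _ => exp_pos _) ⟨y, hy⟩)).1 (h E hE)
  obtain ⟨E, hE⟩ := exists_isSpanning hf n hε
  have hinf : exp B ≤ spanningSum f φ n ε := le_csInf ⟨_, E, hE, rfl⟩ hexp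
  exact (le_log_iff_exp_le ((exp_pos B).trans_le hinf)).2 hinf

theorem indexedEntropy_add_integral_birkhoffSum_le [PseudoMetricSpace X] [MeasurableSpace X]
    {μ : Measure X} [IsProbabilityMeasure μ] {f : X → X} (hf : Measurable f) {φ : X → ℝ}
    {m n : ℕ} (hm : 0 < m) (hS : Integrable (birkhoffSum f φ (n * m)) μ) {ε : ℝ}
    (hφ : ∀ a b, dist a b < ε → φ a ≤ φ b + (m : ℝ)⁻¹) {β : Type*} [Fintype β]
    {κ : β → Set X} (hv : IsMeasurablePartition (withRemainder κ))
    (hκ : Pairwise (Disjoint on fun d => thickening ε (κ d))) {E : Finset X}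
    (hE : IsSpanning f (n * m) ε E) :
    indexedEntropy μ (dynCell f^[m] (withRemainder κ) n) + ∫ x, birkhoffSum f φ (n * m) x ∂μ
      ≤ log (∑ y ∈ E, exp (birkhoffSum f φ (n * m) y)) + n * (1 + log 2) := by
  set R : X → X → Prop := fun x y => ∀ k < n * m, dist (f^[k] x) (f^[k] y) < ε
  have hSR x y (hxy : R x y) : birkhoffSum f φ (n * m) x ≤ birkhoffSum f φ (n * m) y + n := by
    have h := birkhoffSum_le_add_of_forall_dist_lt hφ hxy
    rwa [Nat.cast_mul, mul_inv_cancel_right₀ (by positivity)] at h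
  have hM y : (#{σ | ∃ x ∈ dynCell f^[m] (withRemainder κ) n σ, R x y} : ℝ) ≤ 2 ^ n := by
    refine mod_cast (card_le_card fun σ hσ => ?_).trans
      (card_near_dynCell_withRemainder_le hκ f^[m] n y)
    obtain ⟨x, hx, hxy⟩ := (mem_filter.1 hσ).2
    refine mem_filter.2 ⟨mem_univ σ, x, hx, fun k => ?_⟩
    rw [← Function.iterate_mul]
    exact hxy _ (by nlinarith [k.2])
  have h := indexedEntropy_add_integral_le (hv.dynCell (hf.iterate m) n) hS hE hSR
    fun y _ => hM y
  rw [log_pow] at h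
  linarith

theorem exists_indexedEntropy_add_integral_le_log_spanningSum [PseudoMetricSpace X]
    [CompactSpace X] [MeasurableSpace X] [BorelSpace X] {f : X → X} (hf : Continuous f)
    {μ : Measure X} [IsProbabilityMeasure μ] (hμ : MeasurePreserving f μ μ) {φ : X → ℝ}
    (hφ : Continuous φ) {ι : Type*} [Fintype ι] {t : ι → Set X} (ht : IsMeasurablePartition t)
    {m : ℕ} (hm : 0 < m) :
    ∃ ε > 0, ∀ n : ℕ, indexedEntropy μ (dynCell f t (n * m)) + (n * m : ℕ) * ∫ x, φ x ∂μ
      ≤ log (spanningSum f φ (n * m) ε) + n * (2 + log 2) := by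
  have := nonempty_of_isProbabilityMeasure μ
  have hu : IsMeasurablePartition (dynCell f t m) := ht.dynCell hf.measurable m
  set L := log (Fintype.card (Fin m → ι))
  have hL : 0 ≤ L := log_natCast_nonneg _
  -- code the blocks `u d` of length `m` by closed `κ d ⊆ u d` missing so little mass that
  -- the remainder costs at most one unit of entropy per block
  obtain ⟨κ, hκu, hκ, hκμ⟩ :=
    hu.exists_isClosed_subset_measureReal_compl_le μ (η := (1 + L)⁻¹) (by positivity)
  have hv := hu.withRemainder hκu fun d => (hκ d).measurableSet
  obtain ⟨δ, hδ, hδdisj⟩ := exists_pos_pairwise_disjoint_thickening hκ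
    fun d d' h => (hu.pairwise_disjoint h).mono (hκu d) (hκu d')
  obtain ⟨δ', hδ', hφδ'⟩ := Metric.uniformContinuous_iff.1
    (CompactSpace.uniformContinuous_of_continuous hφ) (m : ℝ)⁻¹ (by positivity)
  refine ⟨min δ δ', lt_min hδ hδ', fun n => ?_⟩
  have hcode : indexedEntropy μ (dynCell f t (n * m))
      ≤ indexedEntropy μ (dynCell f^[m] (withRemainder κ) n) + n := by
    rw [indexedEntropy_dynCell_mul]
    refine (indexedEntropy_dynCell_le_add (hμ.iterate m) hu hκu (fun d => (hκ d).measurableSet)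
      n).trans ?_
    have hLη : (1 + L)⁻¹ * L ≤ 1 := by
      rw [inv_mul_le_iff₀ (by positivity)]
      linarith
    rw [mul_assoc]
    gcongr
    nlinarith [mul_le_mul_of_nonneg_right hκμ hL]
  have hφ' a b (hab : dist a b < min δ δ') : φ a ≤ φ b + (m : ℝ)⁻¹ := by
    linarith [(abs_lt.1 (hφδ' (hab.trans_le (min_le_right δ δ')))).2, Real.dist_eq (φ a) (φ b)]
  have hκ' : Pairwise (Disjoint on fun d => thickening (min δ δ') (κ d)) := fun d d' h =>
    (hδdisj h).mono (thickening_mono (min_le_left δ δ') _) (thickening_mono (min_le_left δ δ') _)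
  have hS : Integrable (birkhoffSum f φ (n * m)) μ :=
    (continuous_finsetSum _ fun k _ => hφ.comp (hf.iterate k)).integrable_of_hasCompactSupport
      (.of_compactSpace _)
  rw [← hμ.integral_birkhoffSum (hφ.integrable_of_hasCompactSupport (.of_compactSpace _))]
  suffices indexedEntropy μ (dynCell f t (n * m)) + ∫ x, birkhoffSum f φ (n * m) x ∂μ
      - n * (2 + log 2) ≤ log (spanningSum f φ (n * m) (min δ δ')) by linarith
  refine le_log_spanningSum hf φ (n * m) (lt_min hδ hδ') fun E hE => ?_
  linarith [indexedEntropy_add_integral_birkhoffSum_le hf.measurable hm hS hφ' hv hκ' hE]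

theorem EReal.coe_liminf_add_le_limsup_add {a b : ℕ → ℝ} (ha : IsBoundedUnder (· ≥ ·) atTop a)
    {m : ℕ} (hm : 0 < m) {c d : ℝ} (h : ∀ᶠ n in atTop, a (n * m) + d ≤ b (n * m) + c) :
    ((liminf a atTop : ℝ) : EReal) + d ≤ limsup (fun N => (b N : EReal)) atTop + c := by
  have hmul : Tendsto (· * m) atTop atTop :=
    tendsto_atTop_atTop.2 fun N => ⟨N, fun n hn => hn.trans (Nat.le_mul_of_pos_right n hm)⟩
  rw [← EReal.coe_add]
  refine EReal.ge_of_forall_gt_iff_ge.1 fun z hz => ?_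
  have hz' : z - d < liminf a atTop := by linarith [EReal.coe_lt_coe_iff.1 hz]
  have hev : ∀ᶠ n in atTop, ((z - c : ℝ) : EReal) ≤ b (n * m) := by
    filter_upwards [hmul.eventually (eventually_lt_of_lt_liminf hz' ha), h] with n hn hn'
    exact EReal.coe_le_coe_iff.2 (by linarith)
  calc (z : EReal) = ((z - c : ℝ) : EReal) + c := by rw [← EReal.coe_add, _root_.sub_add_cancel]
    _ ≤ limsup (fun N => (b N : EReal)) atTop + c :=
      add_le_add_left (le_limsup_of_frequently_le' (hmul.frequently hev.frequently)) _

theorem EReal.le_of_forall_le_add_div {x y : EReal} (C : ℝ)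
    (h : ∀ m : ℕ, 0 < m → x ≤ y + ((C / m : ℝ) : EReal)) : x ≤ y := by
  have hlim : Tendsto (fun m : ℕ => y + ((C / m : ℝ) : EReal)) atTop (𝓝 (y + ((0 : ℝ) : EReal))) :=
    (EReal.continuousAt_add (.inr (by simp)) (.inr (by simp))).tendsto.comp
      (tendsto_const_nhds.prodMk_nhds
        (EReal.tendsto_coe.2 (_root_.tendsto_const_div_atTop_nhds_zero_nat C)))
  rw [EReal.coe_zero, add_zero] at hlim
  exact ge_of_tendsto hlim ((eventually_gt_atTop 0).mono h)

theorem limsup_le_topPressure [PseudoMetricSpace X] (f : X → X) (φ : X → ℝ) {ε : ℝ}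
    (hε : 0 < ε) :
    limsup (fun n : ℕ => ((log (spanningSum f φ n ε) / n : ℝ) : EReal)) atTop
      ≤ topPressure f φ :=
  le_iSup₂ (f := fun ε (_ : 0 < ε) =>
    limsup (fun n : ℕ => ((log (spanningSum f φ n ε) / n : ℝ) : EReal)) atTop) ε hε

theorem dynEntropy_add_integral_le_topPressure_add [PseudoMetricSpace X] [CompactSpace X]
    [MeasurableSpace X] [BorelSpace X] {f : X → X} (hf : Continuous f) {μ : Measure X}
    [IsProbabilityMeasure μ] (hμ : MeasurePreserving f μ μ) {φ : X → ℝ} (hφ : Continuous φ)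
    {P : Finset (Set X)} (hP : IsMeasPartition P) {m : ℕ} (hm : 0 < m) :
    (dynEntropy f μ P : EReal) + ((∫ x, φ x ∂μ : ℝ) : EReal)
      ≤ topPressure f φ + (((2 + log 2) / m : ℝ) : EReal) := by
  obtain ⟨ε, hε, hest⟩ := exists_indexedEntropy_add_integral_le_log_spanningSum hf hμ hφ
    hP.isMeasurablePartition hm
  have hbdd : IsBoundedUnder (· ≥ ·) atTop fun N : ℕ => partitionEntropy μ (dynRefine f P N) / N :=
    isBoundedUnder_of ⟨0, fun N => div_nonneg (sum_nonneg fun A _ =>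
      negMulLog_nonneg measureReal_nonneg measureReal_le_one) N.cast_nonneg⟩
  refine (EReal.coe_liminf_add_le_limsup_add hbdd hm ?_).trans
    (add_le_add_left (limsup_le_topPressure f φ hε) _)
  filter_upwards [eventually_gt_atTop 0] with n hn
  have hN : (0 : ℝ) < (n * m : ℕ) := by positivity
  rw [partitionEntropy_dynRefine μ hP]
  calc indexedEntropy μ (dynCell f _ (n * m)) / (n * m : ℕ) + ∫ x, φ x ∂μ
      = (indexedEntropy μ (dynCell f _ (n * m)) + (n * m : ℕ) * ∫ x, φ x ∂μ) / (n * m : ℕ) := by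
        field_simp
    _ ≤ (log (spanningSum f φ (n * m) ε) + n * (2 + log 2)) / (n * m : ℕ) :=
        div_le_div_of_nonneg_right (hest n) hN.le
    _ = log (spanningSum f φ (n * m) ε) / (n * m : ℕ) + (2 + log 2) / m := by
        field_simp
        push_cast
        ring

end

/-- Variational inequality: for a continuous map `f` of a compact metric space, an
`f`-invariant Borel probability measure `μ` and a continuous potential `φ`, the
measure-theoretic pressure `h_μ(f) + ∫ φ dμ` is at most the topological pressure. -/
theorem measure_pressure_le_topPressure
    {X : Type*} [MetricSpace X] [CompactSpace X] [MeasurableSpace X] [BorelSpace X]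
    (f : X → X) (hf : Continuous f)
    (μ : Measure X) [IsProbabilityMeasure μ] (hμ : MeasurePreserving f μ μ)
    (φ : X → ℝ) (hφ : Continuous φ) :
    ksEntropy f μ + ((∫ x, φ x ∂μ : ℝ) : EReal) ≤ topPressure f φ := by
  have key P (hP : IsMeasPartition P) :
      (dynEntropy f μ P : EReal) + ((∫ x, φ x ∂μ : ℝ) : EReal) ≤ topPressure f φ :=
    EReal.le_of_forall_le_add_div (2 + log 2) fun m hm =>
      dynEntropy_add_integral_le_topPressure_add hf hμ hφ hP hm
  calc ksEntropy f μ + ((∫ x, φ x ∂μ : ℝ) : EReal)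
      ≤ topPressure f φ - ((∫ x, φ x ∂μ : ℝ) : EReal) + ((∫ x, φ x ∂μ : ℝ) : EReal) :=
        add_le_add_left (iSup₂_le fun P hP => (EReal.le_sub_iff_add_le (.inl (EReal.coe_ne_bot _))
          (.inl (EReal.coe_ne_top _))).2 (key P hP)) _
    _ = topPressure f φ := EReal.sub_add_cancel
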